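/- Let N ≥ 1 and A the N×N matrix with A_{ll} = D = (N²+2N)/3 and A_{lj} = -d_{|l-j|} (l ≠ j), d_m = 1/sin²(mπ/(N+1)). Then for the inverse matrix (a^{ij}) = A^{-1}, for every i ∈ {1,...,N}: ∑_{j=1}^{N} a^{ij} d_{N+1-j} = 1. -/

import Mathlib

open Real Finset Matrix

noncomputable def dd (N j : ℕ) : ℝ := 1 / (Real.sin (j * π / (N + 1)))^2

noncomputable def ddP (N t : ℕ) : ℝ := ∑ j ∈ Finset.range t, dd N (j + 1)

lemma my_sin_pos {N m : ℕ} (h1 : 1 ≤ m) (h2 : m ≤ N) : 0 < Real.sin (m * π / (N + 1)) := by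
  apply Real.sin_pos_of_pos_of_lt_pi
  · have : (0:ℝ) < m := by exact_mod_cast h1
    positivity
  · rw [div_lt_iff₀ (by positivity)]
    have hm : (m:ℝ) < (N:ℝ) + 1 := by exact_mod_cast Nat.lt_succ_of_le h2
    nlinarith [Real.pi_pos]

lemma my_weighted_geom {n : ℕ} {z : ℂ} (h1 : z ^ n = 1) (h2 : z ≠ 1) :
    (1 - z) * ∑ j ∈ Finset.range n, (j : ℂ) * z ^ j = -(n : ℂ) := by
  have hg : ∑ j ∈ Finset.range n, z ^ j = 0 := by
    rw [geom_sum_eq h2, h1, sub_self, zero_div]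
  have h3 := Finset.sum_range_sub (fun j => (j : ℂ) * z ^ j) n
  simp only [Nat.cast_add, Nat.cast_one] at h3
  have h4 : z * ∑ j ∈ Finset.range n, (j:ℂ) * z ^ j
      = ∑ j ∈ Finset.range n, (j:ℂ) * z ^ (j+1) := by
    rw [Finset.mul_sum]; apply Finset.sum_congr rfl; intro j _; ring
  have h5 : ∑ j ∈ Finset.range n, (((j:ℂ)+1) * z ^ (j+1) - (j:ℂ) * z ^ j)
      = ∑ j ∈ Finset.range n, (j:ℂ) * z ^ (j+1)
        + z * (∑ j ∈ Finset.range n, z ^ j)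
        - ∑ j ∈ Finset.range n, (j:ℂ) * z ^ j := by
    rw [Finset.mul_sum, ← Finset.sum_add_distrib, ← Finset.sum_sub_distrib]
    apply Finset.sum_congr rfl; intro j _; ring
  rw [h5, hg, h1] at h3
  simp only [mul_zero, add_zero, Nat.cast_zero, zero_mul, pow_zero, mul_one, sub_zero] at h3
  linear_combination -h3 - h4

lemma my_root_sum {n : ℕ} {ζ : ℂ} (hprim : IsPrimitiveRoot ζ n) (m : ℕ) :
    ∑ k ∈ Finset.range n, ζ ^ (k * m) = if n ∣ m then (n : ℂ) else 0 := by
  have hpow : ∀ k : ℕ, ζ ^ (k * m) = (ζ ^ m) ^ k := by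
    intro k; rw [← pow_mul, Nat.mul_comm]
  simp only [hpow]
  by_cases hd : n ∣ m
  · have h1 : ζ ^ m = 1 := (hprim.pow_eq_one_iff_dvd m).mpr hd
    simp [h1, hd]
  · have h1 : ζ ^ m ≠ 1 := fun h => hd ((hprim.pow_eq_one_iff_dvd m).mp h)
    rw [geom_sum_eq h1, ← pow_mul, Nat.mul_comm, pow_mul, hprim.pow_eq_one, one_pow,
      sub_self, zero_div, if_neg hd]

lemma my_sin_zeta (N m : ℕ) :
    ((Real.sin (m * π / (N + 1)) : ℂ))^2 * (-4 * Complex.exp (2 * π * Complex.I / (N+1)) ^ m)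
      = (1 - Complex.exp (2 * π * Complex.I / (N+1)) ^ m)^2 := by
  have hz : Complex.exp (2 * π * Complex.I / (N+1)) ^ m
      = Complex.exp (((m * π / (N + 1) : ℝ) : ℂ) * Complex.I) ^ 2 := by
    rw [← Complex.exp_nat_mul, ← Complex.exp_nat_mul]
    congr 1
    push_cast
    have : ((N:ℂ) + 1) ≠ 0 := by
      have h0 : (0:ℝ) < (N:ℝ) + 1 := by positivity
      exact_mod_cast (by exact_mod_cast h0.ne' : ((N:ℝ)+1 : ℝ) ≠ 0)
    field_simp
  set w := Complex.exp (((m * π / (N + 1) : ℝ) : ℂ) * Complex.I) with hw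
  have hwne : w ≠ 0 := Complex.exp_ne_zero _
  have hsin : ((Real.sin (m * π / (N + 1)) : ℂ)) = (w⁻¹ - w) * Complex.I / 2 := by
    rw [Complex.ofReal_sin, Complex.sin, hw, ← Complex.exp_neg]
    ring_nf
  rw [hz, hsin]
  have hI : Complex.I ^ 2 = -1 := Complex.I_sq
  field_simp
  ring_nf
  rw [hI]
  ring

lemma my_sum_j (n : ℕ) : ∑ j ∈ Finset.range (n+1), (j : ℂ) = n * (n + 1) / 2 := by
  induction n with
  | zero => simp
  | succ k ih => rw [Finset.sum_range_succ, ih]; push_cast; ring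

lemma my_sum_jsq (n : ℕ) :
    ∑ j ∈ Finset.range (n+1), (j : ℂ)^2 = n * (n + 1) * (2 * n + 1) / 6 := by
  induction n with
  | zero => simp
  | succ k ih => rw [Finset.sum_range_succ, ih]; push_cast; ring

lemma my_sum_dd (N : ℕ) :
    ∑ k ∈ Finset.range N, dd N (k+1) = ((N:ℝ)^2 + 2*N) / 3 := by
  set ζ : ℂ := Complex.exp (2 * π * Complex.I / (N+1)) with hζ
  have hprim : IsPrimitiveRoot ζ (N+1) := by
    have h := Complex.isPrimitiveRoot_exp (N+1) (by omega)
    rwa [Nat.cast_add, Nat.cast_one] at h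
  have hn0 : ((N:ℂ)+1) ≠ 0 := by
    have h0 : (0:ℝ) < (N:ℝ) + 1 := by positivity
    exact_mod_cast (by exact_mod_cast h0.ne' : ((N:ℝ)+1 : ℝ) ≠ 0)
  -- per-term identity
  have key : ∀ k ∈ Finset.range N,
      ((N:ℂ)+1)^2 * ((dd N (k+1) : ℝ) : ℂ)
        = -4 * ∑ j ∈ Finset.range (N+1), ∑ m ∈ Finset.range (N+1),
            (j:ℂ) * (m:ℂ) * ζ^((k+1)*(j+m+1)) := by
    intro k hk
    rw [Finset.mem_range] at hk
    set S := ∑ j ∈ Finset.range (N+1), (j:ℂ) * (ζ^(k+1)) ^ j with hS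
    have hz1 : ζ^(k+1) ≠ 1 := hprim.pow_ne_one_of_pos_of_lt (by omega) (by omega)
    have hzn : (ζ^(k+1))^(N+1) = 1 := by
      rw [← pow_mul, mul_comm, pow_mul, hprim.pow_eq_one, one_pow]
    have hgeo : (1 - ζ^(k+1)) * S = -((N+1 : ℕ):ℂ) := my_weighted_geom hzn hz1
    rw [Nat.cast_add, Nat.cast_one] at hgeo
    have hsz := my_sin_zeta N (k+1)
    have hsne : Real.sin ((k+1 : ℕ) * π / ((N:ℝ)+1)) ≠ 0 := (my_sin_pos (by omega) (by omega)).ne'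
    have hddC : ((dd N (k+1) : ℝ) : ℂ) * ((Real.sin ((k+1 : ℕ) * π / ((N:ℝ)+1)) : ℂ))^2 = 1 := by
      have hsneC : ((Real.sin ((k+1 : ℕ) * π / ((N:ℝ)+1)) : ℂ)) ≠ 0 :=
        Complex.ofReal_ne_zero.mpr hsne
      unfold dd
      push_cast at hsneC ⊢
      field_simp [hsneC]
    have hexp : ∑ j ∈ Finset.range (N+1), ∑ m ∈ Finset.range (N+1),
            (j:ℂ) * (m:ℂ) * ζ^((k+1)*(j+m+1)) = ζ^(k+1) * S^2 := by
      rw [sq, hS, Finset.sum_mul_sum, Finset.mul_sum]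
      apply Finset.sum_congr rfl; intro j _
      rw [Finset.mul_sum]
      apply Finset.sum_congr rfl; intro m _
      have harith : (k+1)*(j+m+1) = (k+1)*j + ((k+1)*m + (k+1)) := by ring
      rw [harith, pow_add, pow_add, ← pow_mul, ← pow_mul]
      ring
    rw [hexp]
    have h1 : ((1 - ζ^(k+1)) * S)^2 = ((N:ℂ)+1)^2 := by rw [hgeo]; ring
    calc ((N:ℂ)+1)^2 * ((dd N (k+1) : ℝ) : ℂ)
        = ((1 - ζ^(k+1)) * S)^2 * ((dd N (k+1) : ℝ) : ℂ) := by rw [h1]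
      _ = (1 - ζ^(k+1))^2 * S^2 * ((dd N (k+1) : ℝ) : ℂ) := by ring
      _ = (((Real.sin ((k+1 : ℕ) * π / ((N:ℝ)+1)) : ℂ))^2 * (-4 * ζ^(k+1))) * S^2
            * ((dd N (k+1) : ℝ) : ℂ) := by rw [hsz]
      _ = (((dd N (k+1) : ℝ) : ℂ) * ((Real.sin ((k+1 : ℕ) * π / ((N:ℝ)+1)) : ℂ))^2)
            * (-4 * ζ^(k+1)) * S^2 := by ring
      _ = -4 * (ζ^(k+1) * S^2) := by rw [hddC]; ring
  -- sum over k
  have hsum : ((N:ℂ)+1)^2 * ∑ k ∈ Finset.range N, ((dd N (k+1) : ℝ) : ℂ)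
      = -4 * ∑ j ∈ Finset.range (N+1), ∑ m ∈ Finset.range (N+1),
          (j:ℂ) * (m:ℂ) * (((if (N+1) ∣ (j+m+1) then ((N:ℂ)+1) else 0)) - 1) := by
    rw [Finset.mul_sum, Finset.sum_congr rfl key, ← Finset.mul_sum]
    congr 1
    rw [Finset.sum_comm]
    apply Finset.sum_congr rfl; intro j _
    rw [Finset.sum_comm]
    apply Finset.sum_congr rfl; intro m _
    rw [← Finset.mul_sum]
    congr 1
    have h0 := my_root_sum hprim (j+m+1)
    rw [Finset.sum_range_succ'] at h0
    simp only [Nat.zero_mul, pow_zero, Nat.cast_add, Nat.cast_one] at h0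
    exact eq_sub_of_add_eq h0
  -- evaluate indicator double sum
  have hinner : ∀ j ∈ Finset.range (N+1),
      ∑ m ∈ Finset.range (N+1), (m:ℂ) * (if (N+1) ∣ (j+m+1) then ((N:ℂ)+1) else 0)
        = ((N:ℂ) - j) * ((N:ℂ)+1) := by
    intro j hj
    rw [Finset.mem_range] at hj
    rw [Finset.sum_eq_single (N - j)]
    · rw [if_pos ⟨1, by omega⟩, Nat.cast_sub (by omega)]
    · intro m hm hne
      rw [Finset.mem_range] at hm
      rw [if_neg, mul_zero]
      rintro ⟨c, hc⟩
      match c with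
      | 0 => omega
      | 1 => omega
      | (c+2) =>
        have h2 : (N+1)*2 ≤ (N+1)*(c+2) := Nat.mul_le_mul_left _ (by omega)
        omega
    · intro h; exact absurd (Finset.mem_range.mpr (by omega)) h
  have heval : ∑ j ∈ Finset.range (N+1), ∑ m ∈ Finset.range (N+1),
        (j:ℂ) * (m:ℂ) * (((if (N+1) ∣ (j+m+1) then ((N:ℂ)+1) else 0)) - 1)
      = ((N:ℂ)+1) * ∑ j ∈ Finset.range (N+1), ((N:ℂ) * j - (j:ℂ)^2)
        - (∑ j ∈ Finset.range (N+1), (j:ℂ)) * ∑ j ∈ Finset.range (N+1), (j:ℂ) := by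
    have step1 : ∀ j ∈ Finset.range (N+1),
        ∑ m ∈ Finset.range (N+1),
          (j:ℂ) * (m:ℂ) * (((if (N+1) ∣ (j+m+1) then ((N:ℂ)+1) else 0)) - 1)
        = (j:ℂ) * (((N:ℂ) - j) * ((N:ℂ)+1)) - (j:ℂ) * ∑ m ∈ Finset.range (N+1), (m:ℂ) := by
      intro j hj
      have e1 : ∑ m ∈ Finset.range (N+1),
          (j:ℂ) * (m:ℂ) * (((if (N+1) ∣ (j+m+1) then ((N:ℂ)+1) else 0)) - 1)
          = ∑ m ∈ Finset.range (N+1),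
            ((j:ℂ) * ((m:ℂ) * (if (N+1) ∣ (j+m+1) then ((N:ℂ)+1) else 0)) - (j:ℂ) * (m:ℂ)) := by
        apply Finset.sum_congr rfl; intro m _; ring
      rw [e1, Finset.sum_sub_distrib, ← Finset.mul_sum, ← Finset.mul_sum, hinner j hj]
    rw [Finset.sum_congr rfl step1, Finset.sum_sub_distrib, ← Finset.sum_mul]
    congr 1
    rw [Finset.mul_sum]
    apply Finset.sum_congr rfl; intro j _; ring
  rw [heval] at hsum
  -- finish numerically
  have hcast : ∑ k ∈ Finset.range N, ((dd N (k+1) : ℝ) : ℂ)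
      = ((∑ k ∈ Finset.range N, dd N (k+1) : ℝ) : ℂ) := by push_cast; rfl
  have hval : ∑ j ∈ Finset.range (N+1), ((N:ℂ) * j - (j:ℂ)^2)
      = (N:ℂ) * ((N:ℂ)*((N:ℂ)+1)/2) - (N:ℂ)*((N:ℂ)+1)*(2*(N:ℂ)+1)/6 := by
    rw [Finset.sum_sub_distrib, ← Finset.mul_sum, my_sum_j, my_sum_jsq]
  rw [hcast, hval, my_sum_j] at hsum
  have hgoal : ((N:ℂ)+1)^2 * ((∑ k ∈ Finset.range N, dd N (k+1) : ℝ) : ℂ)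
      = ((N:ℂ)+1)^2 * ((((N:ℝ)^2 + 2*N)/3 : ℝ) : ℂ) := by
    rw [hsum]
    push_cast
    ring
  have hfin := mul_left_cancel₀ (pow_ne_zero 2 hn0) hgoal
  exact_mod_cast hfin

lemma dd_pos {N m : ℕ} (h1 : 1 ≤ m) (h2 : m ≤ N) : 0 < dd N m := by
  have := my_sin_pos h1 h2
  unfold dd; positivity

lemma dd_symm {N m : ℕ} (h2 : m ≤ N) : dd N (N + 1 - m) = dd N m := by
  unfold dd
  congr 1
  have hc : ((N + 1 - m : ℕ) : ℝ) = (N : ℝ) + 1 - m := by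
    have : m ≤ N + 1 := by omega
    push_cast [this]; ring
  rw [hc]
  have hne : (N:ℝ) + 1 ≠ 0 := by positivity
  have : ((N:ℝ) + 1 - m) * π / (N + 1) = π - m * π / (N+1) := by field_simp
  rw [this, Real.sin_pi_sub]

lemma my_left (N i : ℕ) :
    ∑ j ∈ Finset.range i, dd N (((i:ℤ) - (j:ℤ)).natAbs) = ddP N i := by
  unfold ddP
  rw [← Finset.sum_range_reflect (fun j => dd N (((i:ℤ) - (j:ℤ)).natAbs)) i]
  apply Finset.sum_congr rfl
  intro j hj
  rw [Finset.mem_range] at hj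
  congr 1
  omega

lemma my_right (N i : ℕ) (hi : i < N) :
    ∑ j ∈ Finset.Ico (i+1) N, dd N (((i:ℤ) - (j:ℤ)).natAbs) = ddP N (N - 1 - i) := by
  unfold ddP
  rw [Finset.sum_Ico_eq_sum_range]
  have h : N - (i+1) = N - 1 - i := by omega
  rw [h]
  apply Finset.sum_congr rfl
  intro j hj
  rw [Finset.mem_range] at hj
  congr 1
  omega

lemma my_tail (N i : ℕ) (hi : i < N) :
    ddP N N = ddP N i + ddP N (N - 1 - i) + dd N (N - i) := by
  conv_lhs => rw [ddP, ← Finset.sum_range_add_sum_Ico _ (le_of_lt hi)]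
  have h1 : ∑ j ∈ Finset.Ico i N, dd N (j+1)
      = ∑ j ∈ Finset.range (N - i), dd N ((N - i) - j) := by
    rw [Finset.sum_Ico_eq_sum_range]
    apply Finset.sum_congr rfl
    intro j hj
    rw [Finset.mem_range] at hj
    rw [← dd_symm (m := i + j + 1) (by omega)]
    congr 1
    omega
  have h2 : ∑ j ∈ Finset.range (N - i), dd N ((N - i) - j) = ddP N (N - i) := by
    unfold ddP
    rw [← Finset.sum_range_reflect (fun j => dd N ((N - i) - j)) (N - i)]
    apply Finset.sum_congr rfl
    intro j hj
    rw [Finset.mem_range] at hj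
    congr 1
    omega
  have h3 : ddP N (N - i) = ddP N (N - 1 - i) + dd N (N - i) := by
    obtain ⟨t, ht⟩ : ∃ t, N - i = t + 1 := ⟨N - i - 1, by omega⟩
    rw [ht]
    unfold ddP
    rw [Finset.sum_range_succ]
    have : N - 1 - i = t := by omega
    rw [this, ← ht]
  rw [h1, h2, h3]
  unfold ddP
  ring

lemma my_ifsum (N i : ℕ) (hi : i < N) (c e : ℝ) :
    ∑ j ∈ Finset.range N, (if i = j then c else e * dd N (((i:ℤ) - (j:ℤ)).natAbs))
      = c + e * (ddP N i + ddP N (N - 1 - i)) := by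
  rw [← Finset.sum_range_add_sum_Ico _ (le_of_lt hi), Finset.sum_eq_sum_Ico_succ_bot hi,
    if_pos rfl]
  have e1 : ∑ j ∈ Finset.range i, (if i = j then c else e * dd N (((i:ℤ) - (j:ℤ)).natAbs))
      = e * ddP N i := by
    rw [← my_left N i, Finset.mul_sum]
    apply Finset.sum_congr rfl
    intro j hj
    rw [Finset.mem_range] at hj
    rw [if_neg (by omega)]
  have e2 : ∑ j ∈ Finset.Ico (i+1) N, (if i = j then c else e * dd N (((i:ℤ) - (j:ℤ)).natAbs))
      = e * ddP N (N - 1 - i) := by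
    rw [← my_right N i hi, Finset.mul_sum]
    apply Finset.sum_congr rfl
    intro j hj
    rw [Finset.mem_Ico] at hj
    rw [if_neg (by omega)]
  rw [e1, e2]
  ring

lemma my_sum_dd' (N : ℕ) : ddP N N = ((N:ℝ)^2 + 2*N) / 3 := my_sum_dd N

noncomputable def matA (N : ℕ) : Matrix (Fin N) (Fin N) ℝ :=
  fun i j => if i = j then ((N : ℝ)^2 + 2 * N) / 3
             else - dd N (((i : ℕ) : ℤ) - ((j : ℕ) : ℤ)).natAbs

/-- For indices `i j : Fin N` corresponding to `i+1, j+1 ∈ {1,…,N}`, the weight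
`d_{N+1-(j+1)} = d_{N - j}`. -/
theorem invA_row_sum (N : ℕ) (hN : 1 ≤ N) (i : Fin N) :
    ∑ j : Fin N, (matA N)⁻¹ i j * dd N (N - (j : ℕ)) = 1 := by
  classical
  set D : ℝ := ((N:ℝ)^2 + 2 * N) / 3 with hD
  have hD0 : 0 ≤ D := by positivity
  -- row sums of A
  have hrow : ∀ k : Fin N, ∑ j : Fin N, matA N k j = dd N (N - (k:ℕ)) := by
    intro k
    have hkN : (k:ℕ) < N := k.isLt
    have hconv : ∀ j : Fin N, matA N k j
        = (fun m : ℕ => if (k:ℕ) = m then D else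
            (-1) * dd N ((((k:ℕ):ℤ) - (m:ℤ)).natAbs)) (j:ℕ) := by
      intro j
      simp only [matA, Fin.ext_iff, neg_one_mul, hD]
    calc ∑ j : Fin N, matA N k j
        = ∑ m ∈ Finset.range N, (if (k:ℕ) = m then D else
            (-1) * dd N ((((k:ℕ):ℤ) - (m:ℤ)).natAbs)) := by
          rw [← Fin.sum_univ_eq_sum_range]
          exact Finset.sum_congr rfl (fun j _ => hconv j)
      _ = D + (-1) * (ddP N (k:ℕ) + ddP N (N - 1 - (k:ℕ))) := my_ifsum N _ hkN D (-1)
      _ = dd N (N - (k:ℕ)) := by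
          have ht := my_tail N (k:ℕ) hkN
          rw [my_sum_dd'] at ht
          rw [← hD] at ht
          linarith
  -- A times ones
  have hAv : matA N *ᵥ (fun _ => (1:ℝ)) = fun j : Fin N => dd N (N - (j:ℕ)) := by
    funext k
    simpa [Matrix.mulVec, dotProduct] using hrow k
  -- invertibility via diagonal dominance
  have hdet : (matA N).det ≠ 0 := by
    apply det_ne_zero_of_sum_row_lt_diag
    intro k
    have hkN : (k:ℕ) < N := k.isLt
    have hdiag : matA N k k = D := by simp [matA, hD]
    have hnorm : ∀ j : Fin N, ‖matA N k j‖
        = (fun m : ℕ => if (k:ℕ) = m then D else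
            1 * dd N ((((k:ℕ):ℤ) - (m:ℤ)).natAbs)) (j:ℕ) := by
      intro j
      by_cases h : (k:ℕ) = (j:ℕ)
      · have hkj : k = j := Fin.ext h
        subst hkj
        simp [hdiag, Real.norm_eq_abs, abs_of_nonneg hD0]
      · have hne : k ≠ j := fun hh => h (by rw [hh])
        have hb1 : 1 ≤ ((((k:ℕ):ℤ) - ((j:ℕ):ℤ)).natAbs) := by omega
        have hb2 : ((((k:ℕ):ℤ) - ((j:ℕ):ℤ)).natAbs) ≤ N := by
          have := j.isLt; omega
        simp only [matA, if_neg hne, if_neg h, norm_neg, Real.norm_eq_abs, one_mul]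
        exact abs_of_nonneg (dd_pos hb1 hb2).le
    have htot : ∑ j : Fin N, ‖matA N k j‖
        = D + 1 * (ddP N (k:ℕ) + ddP N (N - 1 - (k:ℕ))) := by
      calc ∑ j : Fin N, ‖matA N k j‖
          = ∑ m ∈ Finset.range N, (if (k:ℕ) = m then D else
              1 * dd N ((((k:ℕ):ℤ) - (m:ℤ)).natAbs)) := by
            rw [← Fin.sum_univ_eq_sum_range]
            exact Finset.sum_congr rfl (fun j _ => hnorm j)
        _ = D + 1 * (ddP N (k:ℕ) + ddP N (N - 1 - (k:ℕ))) := my_ifsum N _ hkN D 1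
    have herase : ∑ j ∈ Finset.univ.erase k, ‖matA N k j‖ + ‖matA N k k‖
        = ∑ j : Fin N, ‖matA N k j‖ := Finset.sum_erase_add _ _ (Finset.mem_univ k)
    have hkk : ‖matA N k k‖ = D := by rw [hdiag, Real.norm_eq_abs, abs_of_nonneg hD0]
    have ht := my_tail N (k:ℕ) hkN
    rw [my_sum_dd'] at ht
    have hpos : 0 < dd N (N - (k:ℕ)) := dd_pos (by omega) (by omega)
    rw [hkk]
    have : ∑ j ∈ Finset.univ.erase k, ‖matA N k j‖
        = ddP N (k:ℕ) + ddP N (N - 1 - (k:ℕ)) := by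
      have := herase
      rw [htot, hkk] at this
      linarith
    rw [this]
    rw [← hD] at ht
    linarith
  have hu : (matA N)⁻¹ *ᵥ (fun j : Fin N => dd N (N - (j:ℕ))) = fun _ => (1:ℝ) := by
    rw [← hAv, Matrix.mulVec_mulVec, Matrix.nonsing_inv_mul _ (isUnit_iff_ne_zero.mpr hdet),
      Matrix.one_mulVec]
  calc ∑ j : Fin N, (matA N)⁻¹ i j * dd N (N - (j:ℕ))
      = ((matA N)⁻¹ *ᵥ (fun j : Fin N => dd N (N - (j:ℕ)))) i := by
        simp [Matrix.mulVec, dotProduct]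
    _ = 1 := by rw [hu]
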